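/- Let X be a 2-dimensional simplicial complex and let p : X̃ → X be its universal cover. If X̃ has strong π₁-injectivity, then X has strong π₁-injectivity. -/

import Mathlib

open scoped Classical
open Geometry

/-- Injectivity (trivial kernel, at every base point) of the inclusion-induced map
`π₁(A) → π₁(B)` for `A ⊆ B`. -/
def PiOneInjIncl {X : Type*} [TopologicalSpace X] {A B : Set X} (hAB : A ⊆ B) : Prop :=
  ∀ (a : A) (γ : Path a a),
    (γ.map (continuous_inclusion hAB)).Homotopic (Path.refl (Set.inclusion hAB a)) →
    γ.Homotopic (Path.refl a)

/-- `Y` is a subcomplex of `X`. -/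
def IsSubcomplexOf {G : Type*} [NormedAddCommGroup G] [NormedSpace ℝ G]
    (Y X : SimplicialComplex ℝ G) : Prop := Y.faces ⊆ X.faces

lemma space_subset_of_subcomplex {G : Type*} [NormedAddCommGroup G] [NormedSpace ℝ G]
    {Y X : SimplicialComplex ℝ G} (h : IsSubcomplexOf Y X) :
    Y.space ⊆ X.space :=
  Set.biUnion_subset_biUnion_left h

/-- `X` is (at most) 2-dimensional: every face has at most 3 vertices. -/
def IsTwoDimensional {G : Type*} [NormedAddCommGroup G] [NormedSpace ℝ G]
    (X : SimplicialComplex ℝ G) : Prop := ∀ s ∈ X.faces, s.card ≤ 3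

/-- `Y` is strongly π₁-injective in `X`: for every subcomplex `Z` of `X`, the
inclusion-induced map `π₁(Y ∩ Z) → π₁(Z)` is injective. -/
def StronglyPiOneInjectiveIn {G : Type*} [NormedAddCommGroup G] [NormedSpace ℝ G]
    (Y X : SimplicialComplex ℝ G) : Prop :=
  ∀ Z : SimplicialComplex ℝ G, IsSubcomplexOf Z X →
    PiOneInjIncl (Set.inter_subset_right : Y.space ∩ Z.space ⊆ Z.space)

/-- `X` has strong π₁-injectivity: every π₁-injective subcomplex is strongly π₁-injective. -/
def HasStrongPiOneInjectivity {G : Type*} [NormedAddCommGroup G] [NormedSpace ℝ G]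
    (X : SimplicialComplex ℝ G) : Prop :=
  ∀ (Y : SimplicialComplex ℝ G) (h : IsSubcomplexOf Y X),
    PiOneInjIncl (space_subset_of_subcomplex h) → StronglyPiOneInjectiveIn Y X

variable {E : Type*} [NormedAddCommGroup E] [NormedSpace ℝ E]
variable {F : Type*} [NormedAddCommGroup F] [NormedSpace ℝ F]

/-!
The preimage under `p` of a π₁-injective subcomplex `Y ⊆ X` is π₁-injective in `X̃`: a loop in
`p⁻¹Y` that dies in `X̃` projects to a loop in `Y` that dies in `X`, hence in `Y`, and a covering
map is injective on homotopy classes of paths. So `p⁻¹(Y ∩ Z) ⊆ p⁻¹Z` is π₁-injective for every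
subcomplex `Z ⊆ X`. A loop in `Y ∩ Z` that dies in `Z` lifts to a path in `p⁻¹(Y ∩ Z)`, which is
closed because the null-homotopy in `Z` lifts to `p⁻¹Z`; the lifted loop dies in `p⁻¹Z`, hence in
`p⁻¹(Y ∩ Z)`, and projecting back shows that the original loop dies in `Y ∩ Z`.
-/

open Function Topology unitInterval

namespace IsCoveringMap

variable {C B : Type*} [TopologicalSpace C] [TopologicalSpace B] {p : C → B}

theorem isClosed_range (hp : IsCoveringMap p) : IsClosed (Set.range p) := by
  refine isOpen_compl_iff.mp (isOpen_iff_forall_mem_open.mpr fun x hx => ?_)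
  obtain ⟨-, U, hxU, hU, -, H, -⟩ := hp x
  refine ⟨U, fun y hyU ⟨e, he⟩ => hx ?_, hU, hxU⟩
  obtain ⟨e', he'⟩ := (H ⟨e, show p e ∈ U from he ▸ hyU⟩).2
  exact ⟨e', he'⟩

theorem surjective [ConnectedSpace B] [Nonempty C] (hp : IsCoveringMap p) : Surjective p :=
  Set.range_eq_univ.mp <| IsClopen.eq_univ ⟨hp.isClosed_range, hp.isOpenMap.isOpen_range⟩
    (Set.range_nonempty p)

theorem of_isEmbedding_pullback (hp : IsCoveringMap p) {A' A : Type*} [TopologicalSpace A']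
    [TopologicalSpace A] {i : A' → C} {j : A → B} (hi : IsEmbedding i) (hj : IsEmbedding j)
    (hrange : Set.range i = p ⁻¹' Set.range j) {q : A' → A} (hq : ∀ a, j (q a) = p (i a)) :
    IsCoveringMap q := by
  let e₁ : A' ≃ₜ p ⁻¹' Set.range j := hi.toHomeomorph.trans (.setCongr hrange)
  let e₂ : A ≃ₜ Set.range j := hj.toHomeomorph
  convert ((hp.restrictPreimage (Set.range j)).comp_homeomorph e₁).homeomorph_comp e₂.symm
  ext a
  exact e₂.eq_symm_apply.mpr (Subtype.ext (hq a))

end IsCoveringMap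

section RestrictSubsets

variable {α β : Type*} {s : Set α} {t : Set β} (p : s → t) {u : Set α} {v : Set β}

def restrictSubsets (hus : u ⊆ s) (huv : ∀ x : s, (x : α) ∈ u ↔ (p x : β) ∈ v) : u → v :=
  fun x => ⟨p (Set.inclusion hus x), (huv _).1 x.2⟩

variable {p}

theorem mem_iff_of_image_preimage_eq (h : Subtype.val '' (p ⁻¹' {y : t | (y : β) ∈ v}) = u)
    (x : s) : (x : α) ∈ u ↔ (p x : β) ∈ v := by
  rw [← h, Subtype.val_injective.mem_set_image]
  rfl

theorem restrictSubsets_surjective (hp : Surjective p) (hus : u ⊆ s) (hvt : v ⊆ t)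
    (huv : ∀ x : s, (x : α) ∈ u ↔ (p x : β) ∈ v) : Surjective (restrictSubsets p hus huv) := by
  intro y
  obtain ⟨x, hx⟩ := hp (Set.inclusion hvt y)
  have hxu : (x : α) ∈ u := (huv x).2 (hx ▸ y.2)
  exact ⟨⟨x, hxu⟩, Subtype.ext <| show (p x : β) = y from congrArg Subtype.val hx⟩

theorem IsCoveringMap.restrictSubsets [TopologicalSpace α] [TopologicalSpace β]
    (hp : IsCoveringMap p) (hus : u ⊆ s) (hvt : v ⊆ t)
    (huv : ∀ x : s, (x : α) ∈ u ↔ (p x : β) ∈ v) :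
    IsCoveringMap (restrictSubsets p hus huv) :=
  hp.of_isEmbedding_pullback (.inclusion hus) (.inclusion hvt)
    (by ext x; simp [Set.range_inclusion, huv]) fun _ => rfl

end RestrictSubsets

section PiOneInjective

variable {A B A' B' : Type*} [TopologicalSpace A] [TopologicalSpace B]
  [TopologicalSpace A'] [TopologicalSpace B']

def PiOneInjective (f : C(A, B)) : Prop :=
  ∀ (a : A) (γ : C(I, A)), γ 0 = a → γ 1 = a →
    (f.comp γ).HomotopicRel (.const I (f a)) {0, 1} → γ.HomotopicRel (.const I a) {0, 1}

theorem piOneInjIncl_iff_piOneInjective {X : Type*} [TopologicalSpace X] {A B : Set X}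
    (h : A ⊆ B) : PiOneInjIncl h ↔ PiOneInjective ⟨Set.inclusion h, continuous_inclusion h⟩ :=
  ⟨fun hinj a γ h₀ h₁ => hinj a ⟨γ, h₀, h₁⟩,
    fun hinj a γ => hinj a γ.toContinuousMap γ.source γ.target⟩

theorem PiOneInjective.to_cover {f : C(A, B)} {f' : C(A', B')} {qA : A' → A}
    {qB : C(B', B)} (hqA : IsCoveringMap qA) (comm : ∀ x, f (qA x) = qB (f' x))
    (hf : PiOneInjective f) : PiOneInjective f' := by
  intro a γ h₀ h₁ hnull
  let qA' : C(A', A) := ⟨qA, hqA.continuous⟩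
  have hdown : (f.comp (qA'.comp γ)).HomotopicRel (.const I (f (qA a))) {0, 1} := by
    convert hnull.comp_continuousMap qB using 1
    · ext t; exact comm (γ t)
    · rw [ContinuousMap.comp_const, comm]
  have hup := hf (qA a) (qA'.comp γ) (congrArg qA h₀) (congrArg qA h₁) hdown
  exact (hqA.homotopicRel_iff_comp ⟨(0 : I), .inl rfl, h₀⟩).mpr hup

theorem PiOneInjective.of_cover {f : C(A, B)} {f' : C(A', B')} {qA : A' → A}
    {qB : B' → B} (hqA : IsCoveringMap qA) (hqA_surj : Surjective qA) (hqB : IsCoveringMap qB)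
    (hf'_inj : Injective f') (comm : ∀ x, f (qA x) = qB (f' x))
    (hf' : PiOneInjective f') : PiOneInjective f := by
  intro a γ h₀ h₁ hnull
  obtain ⟨a', rfl⟩ := hqA_surj a
  let Γ := hqA.liftPath γ a' h₀
  have hΓ : qA ∘ Γ = γ := hqA.liftPath_lifts γ a' h₀
  have hΓ₀ : Γ 0 = a' := hqA.liftPath_zero γ a' h₀
  have hfΓ : f'.comp Γ = hqB.liftPath (f.comp γ) (f' a') (by simp [h₀, comm]) :=
    (hqB.eq_liftPath_iff' _).mpr ⟨funext fun t => by simp [← comm, ← hΓ], by simp [hΓ₀]⟩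
  have hΓ₁ : Γ 1 = a' := by
    apply hf'_inj
    have := hqB.liftPath_apply_one_eq_of_homotopicRel hnull (f' a') (by simp [h₀, comm]) (comm a')
    rw [← hfΓ, hqB.liftPath_const (comm a')] at this
    exact this
  have hΓnull : (f'.comp Γ).HomotopicRel (.const I (f' a')) {0, 1} := by
    refine (hqB.homotopicRel_iff_comp ⟨(0 : I), .inl rfl, by simp [hΓ₀]⟩).mpr ?_
    convert hnull using 1
    · ext t; simp [← comm, ← hΓ]
    · ext t; simp [comm]
  convert (hf' a' Γ hΓ₀ hΓ₁ hΓnull).comp_continuousMap ⟨qA, hqA.continuous⟩ using 1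
  · ext t; simp [← hΓ]
  · rfl

end PiOneInjective

theorem hasStrongPiOneInjectivity_of_universal_cover_general
    (X : SimplicialComplex ℝ E)
    (hconn : ConnectedSpace X.space)
    (X' : SimplicialComplex ℝ F) (p : X'.space → X.space)
    (hcov : IsCoveringMap p) (huniv : SimplyConnectedSpace X'.space)
    (hsimplicial : ∀ Z : SimplicialComplex ℝ E, IsSubcomplexOf Z X →
      ∃ W : SimplicialComplex ℝ F, IsSubcomplexOf W X' ∧
        Subtype.val '' (p ⁻¹' {x : X.space | (x : E) ∈ Z.space}) = W.space)
    (hstrong : HasStrongPiOneInjectivity X') :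
    HasStrongPiOneInjectivity X := by
  intro Y hY_sub hYinj Z hZ_sub
  obtain ⟨WY, hWY_sub, hWY⟩ := hsimplicial Y hY_sub
  obtain ⟨WZ, hWZ_sub, hWZ⟩ := hsimplicial Z hZ_sub
  have hY := mem_iff_of_image_preimage_eq hWY
  have hZ := mem_iff_of_image_preimage_eq hWZ
  have hYZ : ∀ x : X'.space, (x : F) ∈ WY.space ∩ WZ.space ↔ (p x : E) ∈ Y.space ∩ Z.space :=
    fun x => and_congr (hY x) (hZ x)
  have hYX := space_subset_of_subcomplex hY_sub
  have hZX := space_subset_of_subcomplex hZ_sub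
  have hWYX' := space_subset_of_subcomplex hWY_sub
  have hWZX' := space_subset_of_subcomplex hWZ_sub
  rw [piOneInjIncl_iff_piOneInjective] at hYinj
  have hWYinj : PiOneInjIncl hWYX' := (piOneInjIncl_iff_piOneInjective _).mpr <|
    hYinj.to_cover (qB := ⟨p, hcov.continuous⟩) (hcov.restrictSubsets hWYX' hYX hY) fun _ => rfl
  have hWYZinj := hstrong WY hWY_sub hWYinj WZ hWZ_sub
  rw [piOneInjIncl_iff_piOneInjective] at hWYZinj ⊢
  have hWYZX' : WY.space ∩ WZ.space ⊆ X'.space := Set.inter_subset_left.trans hWYX'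
  have hYZX : Y.space ∩ Z.space ⊆ X.space := Set.inter_subset_left.trans hYX
  exact hWYZinj.of_cover (hcov.restrictSubsets hWYZX' hYZX hYZ)
    (restrictSubsets_surjective hcov.surjective hWYZX' hYZX hYZ)
    (hcov.restrictSubsets hWZX' hZX hZ) (Set.inclusion_injective Set.inter_subset_right)
    fun _ => rfl

/-- Let `X` be a 2-dimensional simplicial complex and `p : X̃ → X` its
universal cover (`X̃` a simplicial complex whose space is simply connected, `p` a covering map
under which the preimage of any subcomplex of `X` is a subcomplex of `X̃`). If `X̃` has strong
π₁-injectivity, then `X` has strong π₁-injectivity. -/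
theorem hasStrongPiOneInjectivity_of_universal_cover
    (X : SimplicialComplex ℝ E)
    (hdim : IsTwoDimensional X) (hconn : ConnectedSpace X.space)
    (X' : SimplicialComplex ℝ F) (p : X'.space → X.space)
    (hcov : IsCoveringMap p) (huniv : SimplyConnectedSpace X'.space)
    (hsimplicial : ∀ Z : SimplicialComplex ℝ E, IsSubcomplexOf Z X →
      ∃ W : SimplicialComplex ℝ F, IsSubcomplexOf W X' ∧
        Subtype.val '' (p ⁻¹' {x : X.space | (x : E) ∈ Z.space}) = W.space)
    (hstrong : HasStrongPiOneInjectivity X') :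
    HasStrongPiOneInjectivity X :=
  hasStrongPiOneInjectivity_of_universal_cover_general X hconn X' p hcov huniv hsimplicial hstrong
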